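/- In the n-period model with feasibility condition (cumulative demand ≤ cumulative inflow at every t), the greedy policy that stores exactly sₜ = max over r ≥ t of (Σ_{u=t+1}^{r} (d_u − Q_u))⁺ after meeting demand dₜ is feasible and uses the minimal storage at every period. -/
import Mathlib


/-- A storage schedule `s` (with `s t` the storage carried from period `t` to `t+1`,
periods `0, …, n-1`) is feasible if it starts empty, stays nonnegative, and in each
period demand `d t` is met from inflow `Q t` plus carried storage, with the stored
amount not exceeding the leftover water. -/
def IsFeasibleSchedule (n : ℕ) (Q d : ℕ → ℝ) (s : ℕ → ℝ) : Prop :=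
  s 0 = 0 ∧ ∀ t < n, 0 ≤ s (t + 1) ∧ s (t + 1) ≤ s t + Q t - d t

/-- The greedy storage: after meeting demand in period `t-1`, store exactly the
largest future cumulative deficit `max_{t ≤ r ≤ n} (∑_{u ∈ [t, r)} (d u - Q u))⁺`. -/
noncomputable def greedyStorage (n : ℕ) (Q d : ℕ → ℝ) (t : ℕ) : ℝ :=
  (insert t (Finset.Icc t n)).sup' ⟨t, Finset.mem_insert_self t _⟩
    (fun r => max (∑ u ∈ Finset.Ico t r, (d u - Q u)) 0)

private lemma greedy_nonneg (n : ℕ) (Q d : ℕ → ℝ) (t : ℕ) :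
    0 ≤ greedyStorage n Q d t := by
  unfold greedyStorage
  refine le_trans (le_max_right _ 0) (Finset.le_sup'
    (fun r => max (∑ u ∈ Finset.Ico t r, (d u - Q u)) 0) (Finset.mem_insert_self t _))

private lemma greedy_ge (n : ℕ) (Q d : ℕ → ℝ) {t r : ℕ}
    (hr : r ∈ insert t (Finset.Icc t n)) :
    (∑ u ∈ Finset.Ico t r, (d u - Q u)) ≤ greedyStorage n Q d t := by
  unfold greedyStorage
  exact le_trans (le_max_left _ 0) (Finset.le_sup'
    (fun r => max (∑ u ∈ Finset.Ico t r, (d u - Q u)) 0) hr)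

theorem stmt_17 (n : ℕ) (Q d : ℕ → ℝ) (hQ : ∀ t, 0 ≤ Q t) (hd : ∀ t, 0 ≤ d t)
    (hfeas : ∀ t < n, ∑ u ∈ Finset.range (t + 1), d u ≤ ∑ u ∈ Finset.range (t + 1), Q u) :
    IsFeasibleSchedule n Q d (greedyStorage n Q d) ∧
    ∀ s' : ℕ → ℝ, IsFeasibleSchedule n Q d s' →
      ∀ t ≤ n, greedyStorage n Q d t ≤ s' t := by
  constructor
  · constructor
    · -- s 0 = 0
      refine le_antisymm ?_ (greedy_nonneg n Q d 0)
      refine Finset.sup'_le _ _ ?_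
      intro r hr
      rcases Nat.eq_zero_or_pos r with h0 | hpos
      · subst h0; simp
      · have hrn : r ≤ n := by
          rcases Finset.mem_insert.mp hr with h | h
          · omega
          · exact (Finset.mem_Icc.mp h).2
        obtain ⟨m, rfl⟩ : ∃ m, r = m + 1 := ⟨r - 1, by omega⟩
        have hm : m < n := by omega
        have := hfeas m hm
        have hsum : (∑ u ∈ Finset.Ico 0 (m + 1), (d u - Q u)) ≤ 0 := by
          rw [Finset.sum_sub_distrib, ← Finset.range_eq_Ico]
          linarith
        simp only [max_le_iff]
        exact ⟨hsum, le_refl 0⟩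
    · intro t ht
      constructor
      · exact greedy_nonneg n Q d (t + 1)
      · refine Finset.sup'_le _ _ ?_
        intro r hr
        have hr' : t + 1 ≤ r := by
          rcases Finset.mem_insert.mp hr with h | h
          · omega
          · exact (Finset.mem_Icc.mp h).1
        have hrn : r ≤ n := by
          rcases Finset.mem_insert.mp hr with h | h
          · omega
          · exact (Finset.mem_Icc.mp h).2
        have hmem : r ∈ insert t (Finset.Icc t n) :=
          Finset.mem_insert_of_mem (Finset.mem_Icc.mpr ⟨by omega, hrn⟩)
        have hsplit : (∑ u ∈ Finset.Ico t r, (d u - Q u))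
            = (d t - Q t) + ∑ u ∈ Finset.Ico (t + 1) r, (d u - Q u) :=
          Finset.sum_eq_sum_Ico_succ_bot (by omega) _
        have h1 : (∑ u ∈ Finset.Ico t r, (d u - Q u)) ≤ greedyStorage n Q d t :=
          greedy_ge n Q d hmem
        have hmem2 : t + 1 ∈ insert t (Finset.Icc t n) :=
          Finset.mem_insert_of_mem (Finset.mem_Icc.mpr ⟨by omega, by omega⟩)
        have h2 : (∑ u ∈ Finset.Ico t (t + 1), (d u - Q u)) ≤ greedyStorage n Q d t :=
          greedy_ge n Q d hmem2
        rw [Finset.sum_Ico_eq_sum_range] at h2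
        simp at h2
        refine max_le ?_ (by linarith)
        rw [hsplit] at h1
        linarith
  · intro s' hs' t htn
    have hnonneg : ∀ r ≤ n, 0 ≤ s' r := by
      intro r hr
      cases r with
      | zero => rw [hs'.1]
      | succ m => exact (hs'.2 m (by omega)).1
    have htele : ∀ r, t ≤ r → r ≤ n → s' r ≤ s' t + ∑ u ∈ Finset.Ico t r, (Q u - d u) := by
      intro r
      induction r with
      | zero => intro h1 h2; interval_cases t; simp
      | succ m ih =>
        intro h1 h2
        rcases Nat.lt_or_ge t (m + 1) with hlt | hge
        · have htm : t ≤ m := by omega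
          have := ih htm (by omega)
          have hstep := (hs'.2 m (by omega)).2
          rw [Finset.sum_Ico_succ_top htm]
          linarith
        · have : t = m + 1 := by omega
          subst this; simp
    refine Finset.sup'_le _ _ ?_
    intro r hr
    rcases Finset.mem_insert.mp hr with h | h
    · subst h
      simpa using hnonneg _ htn
    · obtain ⟨h1, h2⟩ := Finset.mem_Icc.mp h
      have := htele r h1 h2
      have hr0 := hnonneg r h2
      have hsum : (∑ u ∈ Finset.Ico t r, (d u - Q u))
          = -∑ u ∈ Finset.Ico t r, (Q u - d u) := by
        rw [← Finset.sum_neg_distrib]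
        exact Finset.sum_congr rfl fun x _ => by ring
      refine max_le ?_ (hnonneg t htn)
      rw [hsum]; linarith
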